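/- The function d_B(g₁,g₂) = 1 − v₁₂ᵢ / max{v₁, v₂} is a metric on the set of finite graphs with isomorphic graphs identified (excluding degenerate division by zero by setting d_B to 0 when both graphs are empty), where v₁ and v₂ are the numbers of vertices of g₁ and g₂ and v₁₂ᵢ is the maximum number of vertices of a graph that is induced subgraph isomorphic to both g₁ and g₂. -/
import Mathlib


/-- A finite labeled graph with vertex labels in `LV` and edge labels in `LE`.
Vertices are drawn from `ℕ`; label functions are total on `ℕ` resp. `Sym2 ℕ`
(only the values on actual vertices and edges are relevant). -/
structure LGraph (LV LE : Type) where
  verts : Finset ℕ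
  edges : Finset (Sym2 ℕ)
  edges_sub : ∀ e ∈ edges, ∀ v ∈ e, v ∈ verts
  edges_nodiag : ∀ e ∈ edges, ¬ e.IsDiag
  ℓV : ℕ → LV
  ℓE : Sym2 ℕ → LE

/-- Label-preserving isomorphism of labeled graphs. -/
def LGraph.Iso {LV LE : Type} (g₁ g₂ : LGraph LV LE) : Prop :=
  ∃ φ : ℕ → ℕ,
    Set.BijOn φ ↑g₁.verts ↑g₂.verts ∧
    (∀ u ∈ g₁.verts, ∀ v ∈ g₁.verts, (s(u, v) ∈ g₁.edges ↔ s(φ u, φ v) ∈ g₂.edges)) ∧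
    (∀ v ∈ g₁.verts, g₂.ℓV (φ v) = g₁.ℓV v) ∧
    (∀ u ∈ g₁.verts, ∀ v ∈ g₁.verts, s(u, v) ∈ g₁.edges →
      g₂.ℓE s(φ u, φ v) = g₁.ℓE s(u, v))

/-- `g'` is an induced subgraph of `g`: `V' ⊆ V`, `E' = E ∩ [V']²`, with
agreeing labels. -/
def LGraph.IsInducedSubgraph {LV LE : Type} (g' g : LGraph LV LE) : Prop :=
  g'.verts ⊆ g.verts ∧
  (∀ e : Sym2 ℕ, e ∈ g'.edges ↔ (e ∈ g.edges ∧ ∀ v ∈ e, v ∈ g'.verts)) ∧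
  (∀ v ∈ g'.verts, g'.ℓV v = g.ℓV v) ∧
  (∀ e ∈ g'.edges, g'.ℓE e = g.ℓE e)

/-- `g ⊆ᵢ h` (induced subgraph isomorphism): some induced subgraph of `h` is
isomorphic to `g`. -/
def LGraph.IndSubIso {LV LE : Type} (g h : LGraph LV LE) : Prop :=
  ∃ g'' : LGraph LV LE, LGraph.IsInducedSubgraph g'' h ∧ LGraph.Iso g'' g

/-- `v₁₂ᵢ` : the maximum number of vertices of a graph that is induced
subgraph isomorphic to both `g₁` and `g₂`. -/
noncomputable def v12i {LV LE : Type} (g₁ g₂ : LGraph LV LE) : ℕ :=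
  sSup {k : ℕ | ∃ h : LGraph LV LE,
    h.IndSubIso g₁ ∧ h.IndSubIso g₂ ∧ h.verts.card = k}

/-- Bunke and Shearer's distance
`d_B(g₁,g₂) = 1 − v₁₂ᵢ / max{v₁, v₂}` (set to `0` when both graphs are
empty, to avoid division by zero). -/
noncomputable def dB {LV LE : Type} (g₁ g₂ : LGraph LV LE) : ℝ :=
  if g₁.verts = ∅ ∧ g₂.verts = ∅ then 0
  else 1 - (v12i g₁ g₂ : ℝ) / max (g₁.verts.card : ℝ) (g₂.verts.card : ℝ)

namespace LGraph
variable {LV LE : Type}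

open Classical in
/-- Induced subgraph of `g` on vertex set `s`. -/
noncomputable def induce (g : LGraph LV LE) (s : Finset ℕ) : LGraph LV LE where
  verts := s ∩ g.verts
  edges := g.edges.filter (fun e => ∀ v ∈ e, v ∈ s ∩ g.verts)
  edges_sub := by
    intro e he v hv
    rw [Finset.mem_filter] at he
    exact he.2 v hv
  edges_nodiag := by
    intro e he
    rw [Finset.mem_filter] at he
    exact g.edges_nodiag e he.1
  ℓV := g.ℓV
  ℓE := g.ℓE

@[simp] lemma induce_verts (g : LGraph LV LE) (s : Finset ℕ) :
    (g.induce s).verts = s ∩ g.verts := rfl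

lemma mem_induce_edges (g : LGraph LV LE) (s : Finset ℕ) (e : Sym2 ℕ) :
    e ∈ (g.induce s).edges ↔ e ∈ g.edges ∧ ∀ v ∈ e, v ∈ s ∩ g.verts := by
  simp [induce, Finset.mem_filter]

lemma induce_isInducedSubgraph (g : LGraph LV LE) (s : Finset ℕ) :
    (g.induce s).IsInducedSubgraph g := by
  refine ⟨Finset.inter_subset_right, ?_, fun _ _ => rfl, fun _ _ => rfl⟩
  intro e
  rw [mem_induce_edges]
  rfl

lemma IsInducedSubgraph.refl (g : LGraph LV LE) : g.IsInducedSubgraph g :=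
  ⟨subset_rfl, fun e => ⟨fun he => ⟨he, g.edges_sub e he⟩, fun h => h.1⟩,
    fun _ _ => rfl, fun _ _ => rfl⟩

lemma IsInducedSubgraph.trans {g₁ g₂ g₃ : LGraph LV LE}
    (h12 : g₁.IsInducedSubgraph g₂) (h23 : g₂.IsInducedSubgraph g₃) :
    g₁.IsInducedSubgraph g₃ := by
  obtain ⟨hv12, he12, hlv12, hle12⟩ := h12
  obtain ⟨hv23, he23, hlv23, hle23⟩ := h23
  refine ⟨hv12.trans hv23, ?_, ?_, ?_⟩
  · intro e
    rw [he12, he23]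
    constructor
    · rintro ⟨⟨h1, _⟩, h2⟩; exact ⟨h1, h2⟩
    · rintro ⟨h1, h2⟩; exact ⟨⟨h1, fun v hv => hv12 (h2 v hv)⟩, h2⟩
  · intro v hv; rw [hlv12 v hv, hlv23 v (hv12 hv)]
  · intro e he; rw [hle12 e he, hle23 e ((he12 e).mp he).1]

lemma isInducedSubgraph_of_subset {t u g : LGraph LV LE}
    (ht : t.IsInducedSubgraph g) (hu : u.IsInducedSubgraph g)
    (hsub : t.verts ⊆ u.verts) : t.IsInducedSubgraph u := by
  obtain ⟨hvt, het, hlvt, hlet⟩ := ht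
  obtain ⟨hvu, heu, hlvu, hleu⟩ := hu
  refine ⟨hsub, ?_, ?_, ?_⟩
  · intro e
    rw [het, heu]
    constructor
    · rintro ⟨h1, h2⟩; exact ⟨⟨h1, fun v hv => hsub (h2 v hv)⟩, h2⟩
    · rintro ⟨⟨h1, _⟩, h2⟩; exact ⟨h1, h2⟩
  · intro v hv; rw [hlvt v hv, hlvu v (hsub hv)]
  · intro e he
    rw [hlet e he, hleu e]
    rw [heu]
    have := (het e).mp he
    exact ⟨this.1, fun v hv => hsub (this.2 v hv)⟩

lemma Iso.refl (g : LGraph LV LE) : g.Iso g :=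
  ⟨id, Set.bijOn_id _, fun _ _ _ _ => Iff.rfl, fun _ _ => rfl, fun _ _ _ _ _ => rfl⟩

lemma Iso.symm {g₁ g₂ : LGraph LV LE} (h : g₁.Iso g₂) : g₂.Iso g₁ := by
  obtain ⟨φ, hbij, hedge, hV, hE⟩ := h
  set ψ := Function.invFunOn φ ↑g₁.verts with hψ
  have hinv : Set.InvOn ψ φ ↑g₁.verts ↑g₂.verts := hbij.invOn_invFunOn
  have hbij' : Set.BijOn ψ ↑g₂.verts ↑g₁.verts := Set.BijOn.symm hinv.symm hbij
  have hmem : ∀ v ∈ g₂.verts, ψ v ∈ g₁.verts := fun v hv => hbij'.mapsTo hv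
  have hright : ∀ v ∈ g₂.verts, φ (ψ v) = v := fun v hv => hinv.2 hv
  refine ⟨ψ, hbij', ?_, ?_, ?_⟩
  · intro u hu v hv
    have := hedge (ψ u) (hmem u hu) (ψ v) (hmem v hv)
    rw [hright u hu, hright v hv] at this
    exact this.symm
  · intro v hv
    have := hV (ψ v) (hmem v hv)
    rw [hright v hv] at this
    exact this.symm
  · intro u hu v hv he
    have he' : s(ψ u, ψ v) ∈ g₁.edges := by
      have := hedge (ψ u) (hmem u hu) (ψ v) (hmem v hv)
      rw [hright u hu, hright v hv] at this
      exact this.mpr he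
    have := hE (ψ u) (hmem u hu) (ψ v) (hmem v hv) he'
    rw [hright u hu, hright v hv] at this
    exact this.symm

lemma Iso.trans {g₁ g₂ g₃ : LGraph LV LE} (h12 : g₁.Iso g₂) (h23 : g₂.Iso g₃) :
    g₁.Iso g₃ := by
  obtain ⟨φ, hbij, hedge, hV, hE⟩ := h12
  obtain ⟨χ, hbij', hedge', hV', hE'⟩ := h23
  have hmem : ∀ v ∈ g₁.verts, φ v ∈ g₂.verts := fun v hv => hbij.mapsTo hv
  refine ⟨χ ∘ φ, hbij'.comp hbij, ?_, ?_, ?_⟩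
  · intro u hu v hv
    exact (hedge u hu v hv).trans (hedge' (φ u) (hmem u hu) (φ v) (hmem v hv))
  · intro v hv
    simp only [Function.comp]
    rw [hV' (φ v) (hmem v hv), hV v hv]
  · intro u hu v hv he
    simp only [Function.comp]
    rw [hE' (φ u) (hmem u hu) (φ v) (hmem v hv) ((hedge u hu v hv).mp he),
      hE u hu v hv he]

lemma Iso.card_eq {g₁ g₂ : LGraph LV LE} (h : g₁.Iso g₂) :
    g₁.verts.card = g₂.verts.card := by
  obtain ⟨φ, hbij, -, -, -⟩ := h
  have : g₁.verts.image φ = g₂.verts := by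
    apply Finset.coe_injective
    rw [Finset.coe_image]
    exact hbij.image_eq
  rw [← this, Finset.card_image_of_injOn]
  exact hbij.injOn

/-- Pushforward: the image of an induced subgraph under an isomorphism. -/
lemma push {g₁ g₂ t : LGraph LV LE} (hiso : g₁.Iso g₂)
    (ht : t.IsInducedSubgraph g₁) :
    ∃ t' : LGraph LV LE, t'.IsInducedSubgraph g₂ ∧ t'.Iso t := by
  obtain ⟨φ, hbij, hedge, hV, hE⟩ := hiso
  obtain ⟨hvt, het, hlvt, hlet⟩ := ht
  refine ⟨g₂.induce (t.verts.image φ), induce_isInducedSubgraph _ _, ?_⟩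
  have himg : ∀ v ∈ t.verts, φ v ∈ g₂.verts := fun v hv => hbij.mapsTo (hvt hv)
  have hvts : (g₂.induce (t.verts.image φ)).verts = t.verts.image φ := by
    rw [induce_verts, Finset.inter_eq_left]
    intro x hx
    obtain ⟨v, hv, rfl⟩ := Finset.mem_image.mp hx
    exact himg v hv
  have hker : ∀ u ∈ t.verts, ∀ v ∈ t.verts, φ u = φ v → u = v := by
    intro u hu v hv h
    exact hbij.injOn (by exact_mod_cast hvt hu) (by exact_mod_cast hvt hv) h
  -- the inverse map
  set ψ := Function.invFunOn φ ↑g₁.verts with hψ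
  have hinv : Set.InvOn ψ φ ↑g₁.verts ↑g₂.verts := hbij.invOn_invFunOn
  have hleft : ∀ v ∈ t.verts, ψ (φ v) = v := fun v hv => hinv.1 (by exact_mod_cast hvt hv)
  refine ⟨ψ, ?_, ?_, ?_, ?_⟩
  · rw [hvts]
    constructor
    · intro x hx
      simp only [Finset.coe_image, Set.mem_image] at hx
      obtain ⟨v, hv, rfl⟩ := hx
      rw [hleft v hv]
      exact_mod_cast hv
    constructor
    · intro x hx1 y hy1 hxy
      simp only [Finset.coe_image, Set.mem_image] at hx1 hy1
      obtain ⟨u, hu, rfl⟩ := hx1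
      obtain ⟨v, hv, rfl⟩ := hy1
      rw [hleft u hu, hleft v hv] at hxy
      rw [hxy]
    · intro x hx
      refine ⟨φ x, ?_, hleft x hx⟩
      simp only [Finset.coe_image, Set.mem_image]
      exact ⟨x, hx, rfl⟩
  · -- edges
    intro u hu v hv
    rw [hvts] at hu hv
    obtain ⟨a, ha, rfl⟩ := Finset.mem_image.mp hu
    obtain ⟨b, hb, rfl⟩ := Finset.mem_image.mp hv
    rw [hleft a ha, hleft b hb]
    rw [mem_induce_edges]
    constructor
    · rintro ⟨he, -⟩
      rw [het]
      refine ⟨(hedge a (hvt ha) b (hvt hb)).mpr he, ?_⟩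
      intro x hx
      rw [Sym2.mem_iff] at hx
      rcases hx with rfl | rfl
      exacts [ha, hb]
    · intro he
      have he2 : s(a, b) ∈ g₁.edges := ((het _).mp he).1
      refine ⟨(hedge a (hvt ha) b (hvt hb)).mp he2, ?_⟩
      intro x hx
      rw [Sym2.mem_iff] at hx
      rw [Finset.mem_inter]
      rcases hx with rfl | rfl
      · exact ⟨Finset.mem_image_of_mem φ ha, himg a ha⟩
      · exact ⟨Finset.mem_image_of_mem φ hb, himg b hb⟩
  · -- vertex labels
    intro v hv
    rw [hvts] at hv
    obtain ⟨a, ha, rfl⟩ := Finset.mem_image.mp hv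
    rw [hleft a ha]
    show t.ℓV a = g₂.ℓV (φ a)
    rw [hV a (hvt ha), hlvt a ha]
  · -- edge labels
    intro u hu v hv he
    rw [hvts] at hu hv
    obtain ⟨a, ha, rfl⟩ := Finset.mem_image.mp hu
    obtain ⟨b, hb, rfl⟩ := Finset.mem_image.mp hv
    rw [hleft a ha, hleft b hb]
    rw [mem_induce_edges] at he
    have he1 : s(a, b) ∈ g₁.edges := (hedge a (hvt ha) b (hvt hb)).mpr he.1
    have he2 : s(a, b) ∈ t.edges := by
      rw [het]
      refine ⟨he1, ?_⟩
      intro x hx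
      rw [Sym2.mem_iff] at hx
      rcases hx with rfl | rfl
      exacts [ha, hb]
    show t.ℓE s(a,b) = g₂.ℓE s(φ a, φ b)
    rw [hE a (hvt ha) b (hvt hb) he1, hlet _ he2]

/-- Key transfer lemma: `t ⊆ind s ≅ s' ⊆ind g` implies `t ⊆ᵢ g`. -/
lemma indSubIso_of_chain {t s s' g : LGraph LV LE}
    (h1 : t.IsInducedSubgraph s) (h2 : s.Iso s') (h3 : s'.IsInducedSubgraph g) :
    t.IndSubIso g := by
  obtain ⟨t', ht'1, ht'2⟩ := push h2 h1
  exact ⟨t', ht'1.trans h3, ht'2⟩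

lemma IndSubIso.card_le {h g : LGraph LV LE} (hh : h.IndSubIso g) :
    h.verts.card ≤ g.verts.card := by
  obtain ⟨g'', hsub, hiso⟩ := hh
  rw [← hiso.card_eq]
  exact Finset.card_le_card hsub.1

lemma IndSubIso.refl (g : LGraph LV LE) : g.IndSubIso g :=
  ⟨g, IsInducedSubgraph.refl g, Iso.refl g⟩

lemma indSubIso_of_iso {h h' g : LGraph LV LE} (hi : h.Iso h') (hh : h.IndSubIso g) :
    h'.IndSubIso g := by
  obtain ⟨g'', hsub, hiso⟩ := hh
  exact ⟨g'', hsub, hiso.trans hi⟩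

lemma indSubIso_target_iso {h g g' : LGraph LV LE} (hg : g.Iso g') (hh : h.IndSubIso g) :
    h.IndSubIso g' := by
  obtain ⟨g'', hsub, hiso⟩ := hh
  obtain ⟨t', ht'1, ht'2⟩ := push hg hsub
  exact ⟨t', ht'1, ht'2.trans hiso⟩

/-- The empty graph (with `g`'s labels). -/
def emptyLike (g : LGraph LV LE) : LGraph LV LE :=
  ⟨∅, ∅, by simp, by simp, g.ℓV, g.ℓE⟩

lemma emptyLike_indSubIso (g h : LGraph LV LE) : (emptyLike g).IndSubIso h := by
  refine ⟨emptyLike h, ?_, ?_⟩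
  · refine ⟨Finset.empty_subset _, ?_, ?_, ?_⟩
    · intro e
      simp only [emptyLike, Finset.notMem_empty, false_iff, not_and]
      intro he hall
      obtain ⟨a, b⟩ := e; have ha : a ∈ s(a,b) := Sym2.mem_mk_left a b
      simp at hall; exact (hall a).1 rfl
    · intro v hv; exact absurd hv (Finset.notMem_empty v)
    · intro e he; exact absurd he (Finset.notMem_empty e)
  · exact ⟨id, by simp [emptyLike], by simp [emptyLike], by simp [emptyLike],
      by simp [emptyLike]⟩

end LGraph
-- v12i lemmas
namespace LGraph
variable {LV LE : Type}

def S (g₁ g₂ : LGraph LV LE) : Set ℕ :=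
  {k : ℕ | ∃ h : LGraph LV LE, h.IndSubIso g₁ ∧ h.IndSubIso g₂ ∧ h.verts.card = k}

lemma v12i_eq_sSup (g₁ g₂ : LGraph LV LE) : v12i g₁ g₂ = sSup (S g₁ g₂) := rfl

lemma S_nonempty (g₁ g₂ : LGraph LV LE) : (S g₁ g₂).Nonempty :=
  ⟨0, emptyLike g₁, emptyLike_indSubIso _ _, emptyLike_indSubIso _ _, by simp [emptyLike]⟩

lemma S_bddAbove (g₁ g₂ : LGraph LV LE) : BddAbove (S g₁ g₂) := by
  refine ⟨g₁.verts.card, ?_⟩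
  rintro k ⟨h, h1, h2, rfl⟩
  exact h1.card_le

lemma v12i_mem (g₁ g₂ : LGraph LV LE) : v12i g₁ g₂ ∈ S g₁ g₂ :=
  Nat.sSup_mem (S_nonempty g₁ g₂) (S_bddAbove g₁ g₂)

lemma le_v12i {h g₁ g₂ : LGraph LV LE} (h1 : h.IndSubIso g₁) (h2 : h.IndSubIso g₂) :
    h.verts.card ≤ v12i g₁ g₂ :=
  le_csSup (S_bddAbove g₁ g₂) ⟨h, h1, h2, rfl⟩

lemma v12i_le_left (g₁ g₂ : LGraph LV LE) : v12i g₁ g₂ ≤ g₁.verts.card := by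
  obtain ⟨h, h1, h2, hc⟩ := v12i_mem g₁ g₂
  rw [← hc]; exact h1.card_le

lemma v12i_le_right (g₁ g₂ : LGraph LV LE) : v12i g₁ g₂ ≤ g₂.verts.card := by
  obtain ⟨h, h1, h2, hc⟩ := v12i_mem g₁ g₂
  rw [← hc]; exact h2.card_le

lemma v12i_comm (g₁ g₂ : LGraph LV LE) : v12i g₁ g₂ = v12i g₂ g₁ := by
  unfold v12i
  congr 1
  ext k
  exact ⟨fun ⟨h, a, b, c⟩ => ⟨h, b, a, c⟩, fun ⟨h, a, b, c⟩ => ⟨h, b, a, c⟩⟩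

lemma v12i_of_iso {g₁ g₂ : LGraph LV LE} (h : g₁.Iso g₂) :
    v12i g₁ g₂ = g₁.verts.card := by
  refine le_antisymm (v12i_le_left g₁ g₂) ?_
  exact le_v12i (IndSubIso.refl g₁) ⟨g₂, IsInducedSubgraph.refl g₂, h.symm⟩

/-- The key combinatorial lemma for the triangle inequality. -/
lemma v12i_triangle (g₁ g₂ g₃ : LGraph LV LE) :
    v12i g₁ g₂ + v12i g₂ g₃ ≤ g₂.verts.card + v12i g₁ g₃ := by
  obtain ⟨h, h1, h2, hc⟩ := v12i_mem g₁ g₂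
  obtain ⟨h', h1', h2', hc'⟩ := v12i_mem g₂ g₃
  obtain ⟨s₁, hs₁, his₁⟩ := h2
  obtain ⟨s₂, hs₂, his₂⟩ := h1'
  -- t : induced subgraph of g₂ on s₁.verts ∩ s₂.verts
  set t := g₂.induce (s₁.verts ∩ s₂.verts) with hts
  have htind : t.IsInducedSubgraph g₂ := induce_isInducedSubgraph _ _
  have htverts : t.verts = s₁.verts ∩ s₂.verts := by
    rw [hts, induce_verts, Finset.inter_eq_left]
    exact (Finset.inter_subset_left).trans hs₁.1
  have hts₁ : t.IsInducedSubgraph s₁ :=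
    isInducedSubgraph_of_subset htind hs₁ (htverts ▸ Finset.inter_subset_left)
  have hts₂ : t.IsInducedSubgraph s₂ :=
    isInducedSubgraph_of_subset htind hs₂ (htverts ▸ Finset.inter_subset_right)
  -- t is common induced-subgraph-isomorphic to g₁ and g₃
  obtain ⟨u₁, hu₁, hiu₁⟩ := h1
  obtain ⟨u₂, hu₂, hiu₂⟩ := h2'
  have ht1 : t.IndSubIso g₁ := indSubIso_of_chain hts₁ (his₁.trans hiu₁.symm) hu₁
  have ht3 : t.IndSubIso g₃ := indSubIso_of_chain hts₂ (his₂.trans hiu₂.symm) hu₂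
  have hcard : s₁.verts.card + s₂.verts.card ≤ g₂.verts.card + t.verts.card := by
    rw [htverts]
    have := Finset.card_union_add_card_inter s₁.verts s₂.verts
    have hle : (s₁.verts ∪ s₂.verts).card ≤ g₂.verts.card :=
      Finset.card_le_card (Finset.union_subset hs₁.1 hs₂.1)
    omega
  have h1c : s₁.verts.card = v12i g₁ g₂ := by rw [his₁.card_eq, hc]
  have h2c : s₂.verts.card = v12i g₂ g₃ := by rw [his₂.card_eq, hc']
  have := le_v12i ht1 ht3
  omega

end LGraph
lemma dB_tri_real (a b c x y z : ℝ) (ha : 0 ≤ a) (hb : 0 ≤ b) (hc : 0 ≤ c)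
    (hx0 : 0 ≤ x) (hy0 : 0 ≤ y) (hz0 : 0 ≤ z)
    (hxa : x ≤ a) (hxb : x ≤ b) (hyb : y ≤ b) (hyc : y ≤ c)
    (hkey : x + y ≤ b + z)
    (h12 : 0 < max a b) (h23 : 0 < max b c) (h13 : 0 < max a c) :
    x / max a b + y / max b c ≤ 1 + z / max a c := by
  have key : ∀ p q r : ℝ, 0 < p → 0 < q → 0 < r →
      (x * q + y * p) * r ≤ (r + z) * (p * q) → x / p + y / q ≤ 1 + z / r := by
    intro p q r hp hq hr h
    rw [show (1:ℝ) + z / r = (r + z) / r by field_simp,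
      div_add_div _ _ (ne_of_gt hp) (ne_of_gt hq),
      div_le_div_iff₀ (by positivity) hr]
    linear_combination h
  rcases le_total a b with hab | hab <;> rcases le_total b c with hbc | hbc <;>
    rcases le_total a c with hac | hac
  · -- a ≤ b ≤ c, a ≤ c : M12=b, M23=c, M13=c
    rw [max_eq_right hab, max_eq_right hbc, max_eq_right hac] at *
    refine key b c c h12 h23 h13 ?_
    nlinarith [mul_nonneg (mul_nonneg hc (sub_nonneg.2 hxb)) (sub_nonneg.2 hbc),
      mul_nonneg hc (sub_nonneg.2 hkey)]
  · -- a ≤ b ≤ c, c ≤ a : all equal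
    rw [max_eq_right hab, max_eq_right hbc, max_eq_left hac] at *
    refine key b c a h12 h23 h13 ?_
    have h1 : a = b := le_antisymm hab (hbc.trans hac)
    have h2 : b = c := le_antisymm hbc (hac.trans hab)
    subst h2; subst h1
    nlinarith [mul_nonneg (mul_nonneg ha ha) (sub_nonneg.2 hkey)]
  · -- a ≤ b, c ≤ b, a ≤ c : M12=b, M23=b, M13=c
    rw [max_eq_right hab, max_eq_left hbc, max_eq_right hac] at *
    refine key b b c h12 h23 h13 ?_
    -- (x+y) b c ≤ (c+z) b², from x+y ≤ b+z and z(b-c) ≥ 0, c ≤ b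
    nlinarith [mul_nonneg (mul_nonneg hb hc) (sub_nonneg.2 hkey),
      mul_nonneg (mul_nonneg hb hz0) (sub_nonneg.2 hbc)]
  · -- a ≤ b, c ≤ b, c ≤ a : M12=b, M23=b, M13=a
    rw [max_eq_right hab, max_eq_left hbc, max_eq_left hac] at *
    refine key b b a h12 h23 h13 ?_
    nlinarith [mul_nonneg (mul_nonneg hb ha) (sub_nonneg.2 hkey),
      mul_nonneg (mul_nonneg hb hz0) (sub_nonneg.2 hab)]
  · -- b ≤ a, b ≤ c, a ≤ c : M12=a, M23=c, M13=c
    rw [max_eq_left hab, max_eq_right hbc, max_eq_right hac] at *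
    refine key a c c h12 h23 h13 ?_
    -- xc + ay ≤ ac + az ; cert: (a-x)(c-b) ≥ 0, x(a-b) ≥ 0, a(b+z-x-y) ≥ 0
    nlinarith [mul_nonneg (mul_nonneg hc (sub_nonneg.2 hxa)) (sub_nonneg.2 hbc),
      mul_nonneg (mul_nonneg hc hx0) (sub_nonneg.2 hab),
      mul_nonneg (mul_nonneg hc ha) (sub_nonneg.2 hkey)]
  · -- b ≤ a, b ≤ c, c ≤ a : M12=a, M23=c, M13=a
    rw [max_eq_left hab, max_eq_right hbc, max_eq_left hac] at *
    refine key a c a h12 h23 h13 ?_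
    nlinarith [mul_nonneg (mul_nonneg ha (sub_nonneg.2 hyc)) (sub_nonneg.2 hab),
      mul_nonneg (mul_nonneg ha hy0) (sub_nonneg.2 hbc),
      mul_nonneg (mul_nonneg ha hc) (sub_nonneg.2 hkey)]
  · -- b ≤ a and c ≤ b and a ≤ c: all equal
    rw [max_eq_left hab, max_eq_left hbc, max_eq_right hac] at *
    refine key a b c h12 h23 h13 ?_
    have h1 : a = b := le_antisymm (hac.trans hbc) hab
    have h2 : b = c := le_antisymm (hab.trans hac) hbc
    subst h2; subst h1
    nlinarith [mul_nonneg (mul_nonneg ha ha) (sub_nonneg.2 hkey)]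
  · -- c ≤ b ≤ a : M12=a, M23=b, M13=a
    rw [max_eq_left hab, max_eq_left hbc, max_eq_left hac] at *
    refine key a b a h12 h23 h13 ?_
    -- xb + ay ≤ ab + bz : (b-y)(a-b) ≥ 0, y(b-c)?... cert: b(b+z-x-y)≥0, (b-y)(a-b)≥0
    nlinarith [mul_nonneg (mul_nonneg ha hb) (sub_nonneg.2 hkey),
      mul_nonneg (mul_nonneg ha (sub_nonneg.2 hyb)) (sub_nonneg.2 hab),
      mul_nonneg (mul_nonneg ha hz0) (sub_nonneg.2 hab)]

lemma LGraph.iso_of_induced_full {LV LE : Type} {g' g : LGraph LV LE}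
    (h : g'.IsInducedSubgraph g) (hv : g'.verts = g.verts) : g.Iso g' := by
  obtain ⟨hsub, hed, hlv, hle⟩ := h
  have memv : ∀ v ∈ g.verts, v ∈ g'.verts := fun v hvv => hv ▸ hvv
  have edmem : ∀ u ∈ g.verts, ∀ v ∈ g.verts, (s(u,v) ∈ g.edges ↔ s(u,v) ∈ g'.edges) := by
    intro u hu v hvv
    rw [hed]
    constructor
    · intro he
      refine ⟨he, ?_⟩
      intro w hw
      rw [Sym2.mem_iff] at hw
      exact hw.elim (fun h => h ▸ memv u hu) (fun h => h ▸ memv v hvv)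
    · exact fun h => h.1
  refine ⟨id, by rw [hv]; exact Set.bijOn_id _, fun u hu v hvv => edmem u hu v hvv, ?_, ?_⟩
  · intro v hvv
    exact hlv v (memv v hvv)
  · intro u hu v hvv he
    exact hle s(u,v) ((edmem u hu v hvv).mp he)


/-- `d_B` is a metric on the set of finite graphs with
isomorphic graphs identified: nonnegative, vanishing on isomorphic pairs
(in particular `d_B(g,g) = 0`), symmetric, satisfying the triangle
inequality, and separating points up to isomorphism. -/
theorem dB_is_metric (LV LE : Type) :
    (∀ g₁ g₂ : LGraph LV LE, 0 ≤ dB g₁ g₂) ∧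
    (∀ g : LGraph LV LE, dB g g = 0) ∧
    (∀ g₁ g₂ : LGraph LV LE, g₁.Iso g₂ → dB g₁ g₂ = 0) ∧
    (∀ g₁ g₂ : LGraph LV LE, dB g₁ g₂ = dB g₂ g₁) ∧
    (∀ g₁ g₂ g₃ : LGraph LV LE, dB g₁ g₃ ≤ dB g₁ g₂ + dB g₂ g₃) ∧
    (∀ g₁ g₂ : LGraph LV LE, dB g₁ g₂ = 0 → g₁.Iso g₂) := by
  have hmaxpos : ∀ G H : LGraph LV LE, ¬(G.verts = ∅ ∧ H.verts = ∅) →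
      (0:ℝ) < max (G.verts.card : ℝ) (H.verts.card : ℝ) := by
    intro G H h
    rw [not_and_or] at h
    rw [lt_max_iff]
    rcases h with h | h
    · left
      have : 0 < G.verts.card := Finset.card_pos.2 (Finset.nonempty_iff_ne_empty.2 h)
      exact_mod_cast this
    · right
      have : 0 < H.verts.card := Finset.card_pos.2 (Finset.nonempty_iff_ne_empty.2 h)
      exact_mod_cast this
  have hvle : ∀ G H : LGraph LV LE,
      (v12i G H : ℝ) ≤ max (G.verts.card : ℝ) (H.verts.card : ℝ) := by
    intro G H
    refine le_trans ?_ (le_max_left _ _)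
    exact_mod_cast LGraph.v12i_le_left G H
  have hnonneg : ∀ g₁ g₂ : LGraph LV LE, 0 ≤ dB g₁ g₂ := by
    intro g₁ g₂
    unfold dB
    split_ifs with h
    · exact le_refl _
    · have h1 := hmaxpos g₁ g₂ h
      have h2 := hvle g₁ g₂
      have := div_le_one_of_le₀ h2 h1.le
      linarith
  have hiso0 : ∀ g₁ g₂ : LGraph LV LE, g₁.Iso g₂ → dB g₁ g₂ = 0 := by
    intro g₁ g₂ h
    unfold dB
    split_ifs with hc
    · rfl
    · have hcard : g₁.verts.card = g₂.verts.card := h.card_eq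
      have hne : g₁.verts.card ≠ 0 := by
        intro h0
        exact hc ⟨Finset.card_eq_zero.mp h0, Finset.card_eq_zero.mp (hcard ▸ h0)⟩
      rw [LGraph.v12i_of_iso h, ← hcard, max_self, div_self (by exact_mod_cast hne),
        sub_self]
  have hsymm : ∀ g₁ g₂ : LGraph LV LE, dB g₁ g₂ = dB g₂ g₁ := by
    intro g₁ g₂
    unfold dB
    rw [LGraph.v12i_comm, max_comm]
    by_cases hc : g₁.verts = ∅ ∧ g₂.verts = ∅
    · rw [if_pos hc, if_pos (and_comm.mp hc)]
    · rw [if_neg hc, if_neg (fun h => hc (and_comm.mp h))]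
  refine ⟨hnonneg, fun g => hiso0 g g (LGraph.Iso.refl g), hiso0, hsymm, ?_, ?_⟩
  · -- triangle inequality
    intro g₁ g₂ g₃
    by_cases h13 : g₁.verts = ∅ ∧ g₃.verts = ∅
    · rw [show dB g₁ g₃ = 0 from if_pos h13]
      exact add_nonneg (hnonneg g₁ g₂) (hnonneg g₂ g₃)
    · by_cases h12 : g₁.verts = ∅ ∧ g₂.verts = ∅
      · -- g₁, g₂ empty, g₃ not
        have h3 : g₃.verts ≠ ∅ := fun h => h13 ⟨h12.1, h⟩
        have h23 : ¬(g₂.verts = ∅ ∧ g₃.verts = ∅) := fun h => h3 h.2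
        have hz : v12i g₁ g₃ = 0 := by
          have := LGraph.v12i_le_left g₁ g₃; rw [h12.1] at this; simpa using this
        have hy : v12i g₂ g₃ = 0 := by
          have := LGraph.v12i_le_left g₂ g₃; rw [h12.2] at this; simpa using this
        rw [show dB g₁ g₂ = 0 from if_pos h12,
          show dB g₁ g₃ = _ from if_neg h13, show dB g₂ g₃ = _ from if_neg h23,
          hz, hy]
        simp
      · by_cases h23 : g₂.verts = ∅ ∧ g₃.verts = ∅
        · have h1 : g₁.verts ≠ ∅ := fun h => h13 ⟨h, h23.2⟩
          have hz : v12i g₁ g₃ = 0 := by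
            have := LGraph.v12i_le_right g₁ g₃; rw [h23.2] at this; simpa using this
          have hx : v12i g₁ g₂ = 0 := by
            have := LGraph.v12i_le_right g₁ g₂; rw [h23.1] at this; simpa using this
          rw [show dB g₂ g₃ = 0 from if_pos h23,
            show dB g₁ g₃ = _ from if_neg h13, show dB g₁ g₂ = _ from if_neg h12,
            hz, hx]
          simp
        · -- main case
          rw [show dB g₁ g₃ = _ from if_neg h13, show dB g₁ g₂ = _ from if_neg h12,
            show dB g₂ g₃ = _ from if_neg h23]
          have key := LGraph.v12i_triangle g₁ g₂ g₃
          have harith := dB_tri_real (g₁.verts.card : ℝ) (g₂.verts.card : ℝ)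
            (g₃.verts.card : ℝ) (v12i g₁ g₂ : ℝ) (v12i g₂ g₃ : ℝ) (v12i g₁ g₃ : ℝ)
            (by positivity) (by positivity) (by positivity)
            (by positivity) (by positivity) (by positivity)
            (by exact_mod_cast LGraph.v12i_le_left g₁ g₂)
            (by exact_mod_cast LGraph.v12i_le_right g₁ g₂)
            (by exact_mod_cast LGraph.v12i_le_left g₂ g₃)
            (by exact_mod_cast LGraph.v12i_le_right g₂ g₃)
            (by exact_mod_cast key)
            (hmaxpos g₁ g₂ h12) (hmaxpos g₂ g₃ h23) (hmaxpos g₁ g₃ h13)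
          linarith
  · -- separation
    intro g₁ g₂ h
    unfold dB at h
    split_ifs at h with hc
    · obtain ⟨h1, h2⟩ := hc
      exact ⟨id, by rw [h1, h2]; exact Set.bijOn_id _, by simp [h1],
        by simp [h1], by simp [h1]⟩
    · have hmax := hmaxpos g₁ g₂ hc
      have heq : (v12i g₁ g₂ : ℝ) = max (g₁.verts.card : ℝ) (g₂.verts.card : ℝ) := by
        have : (v12i g₁ g₂ : ℝ) / max (g₁.verts.card : ℝ) (g₂.verts.card : ℝ) = 1 := by
          linarith
        field_simp at this
        linarith [this]
      have heqn : v12i g₁ g₂ = max g₁.verts.card g₂.verts.card := by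
        have : ((v12i g₁ g₂ : ℕ) : ℝ) = ((max g₁.verts.card g₂.verts.card : ℕ) : ℝ) := by
          rw [heq]; push_cast; rfl
        exact_mod_cast this
      have h1 : v12i g₁ g₂ = g₁.verts.card :=
        le_antisymm (LGraph.v12i_le_left g₁ g₂) (heqn ▸ le_max_left _ _)
      have h2 : v12i g₁ g₂ = g₂.verts.card :=
        le_antisymm (LGraph.v12i_le_right g₁ g₂) (heqn ▸ le_max_right _ _)
      obtain ⟨hh, hi1, hi2, hcard⟩ := LGraph.v12i_mem g₁ g₂
      obtain ⟨u₁, hu₁, hiu₁⟩ := hi1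
      obtain ⟨u₂, hu₂, hiu₂⟩ := hi2
      have hv1 : u₁.verts = g₁.verts := by
        apply Finset.eq_of_subset_of_card_le hu₁.1
        rw [hiu₁.card_eq, hcard, ← h1]
      have hv2 : u₂.verts = g₂.verts := by
        apply Finset.eq_of_subset_of_card_le hu₂.1
        rw [hiu₂.card_eq, hcard, ← h2]
      have i1 : g₁.Iso hh := (LGraph.iso_of_induced_full hu₁ hv1).trans hiu₁
      have i2 : g₂.Iso hh := (LGraph.iso_of_induced_full hu₂ hv2).trans hiu₂
      exact i1.trans i2.symm
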